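/- Let (X, ≪) be a weakly distinguishing chronological set and let X̄ be any completion of X, endowed with the relation (P,F) ≪̄ (P',F') iff F ∩ P' ≠ ∅. Then (X̄, ≪̄) is a chronological set: ≪̄ is transitive and irreflexive, every element of X̄ is ≪̄-related to some element, and for any countable dense subset D of X the set i[D] is a countable dense subset of (X̄, ≪̄). -/
import Mathlib


namespace CausalBoundary

variable {X : Type*}

/-- The past of a set of points: `I⁻[S]`. -/
def pastOf (r : X → X → Prop) (S : Set X) : Set X := {x | ∃ s ∈ S, r x s}

/-- The future of a set of points: `I⁺[S]`. -/
def futureOf (r : X → X → Prop) (S : Set X) : Set X := {x | ∃ s ∈ S, r s x}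

/-- The past of a point: `I⁻(x)`. -/
def pastPt (r : X → X → Prop) (x : X) : Set X := {y | r y x}

/-- The future of a point: `I⁺(x)`. -/
def futPt (r : X → X → Prop) (x : X) : Set X := {y | r x y}

/-- A past set: `P = I⁻[P]`. -/
def IsPastSet (r : X → X → Prop) (P : Set X) : Prop := P = pastOf r P

/-- A future set: `F = I⁺[F]`. -/
def IsFutureSet (r : X → X → Prop) (F : Set X) : Prop := F = futureOf r F

/-- An indecomposable past set (IP): a nonempty past set which is not the union of
two proper subsets which are both past sets. -/
def IsIP (r : X → X → Prop) (P : Set X) : Prop :=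
  IsPastSet r P ∧ P.Nonempty ∧
    ¬ ∃ P₁ P₂ : Set X, IsPastSet r P₁ ∧ IsPastSet r P₂ ∧ P₁ ⊂ P ∧ P₂ ⊂ P ∧ P = P₁ ∪ P₂

/-- An indecomposable future set (IF). -/
def IsIF (r : X → X → Prop) (F : Set X) : Prop :=
  IsFutureSet r F ∧ F.Nonempty ∧
    ¬ ∃ F₁ F₂ : Set X, IsFutureSet r F₁ ∧ IsFutureSet r F₂ ∧ F₁ ⊂ F ∧ F₂ ⊂ F ∧ F = F₁ ∪ F₂

/-- `dec(P)`: the set of all maximal IPs (under inclusion) contained in `P`. -/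
def decP (r : X → X → Prop) (P : Set X) : Set (Set X) :=
  {Q | IsIP r Q ∧ Q ⊆ P ∧ ∀ Q' : Set X, IsIP r Q' → Q' ⊆ P → Q ⊆ Q' → Q = Q'}

/-- `dec(F)` for future sets: the set of all maximal IFs contained in `F`. -/
def decF (r : X → X → Prop) (F : Set X) : Set (Set X) :=
  {Q | IsIF r Q ∧ Q ⊆ F ∧ ∀ Q' : Set X, IsIF r Q' → Q' ⊆ F → Q ⊆ Q' → Q = Q'}

/-- Inferior limit of a sequence of sets: `LI(Aₙ) = ∪ₙ ∩_{k ≥ n} A_k`. -/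
def seqLI (A : ℕ → Set X) : Set X := ⋃ n, ⋂ k, ⋂ (_ : n ≤ k), A k

/-- Superior limit of a sequence of sets: `LS(Aₙ) = ∩ₙ ∪_{k ≥ n} A_k`. -/
def seqLS (A : ℕ → Set X) : Set X := ⋂ n, ⋃ k, ⋃ (_ : n ≤ k), A k

/-- The limit operator `L̂`: `P ∈ L̂(σ)` iff `P` is an IP with `P ⊆ LI(I⁻(σₙ))` and
`P` is a maximal IP within `LS(I⁻(σₙ))`. -/
def Lhat (r : X → X → Prop) (σ : ℕ → X) : Set (Set X) :=
  {P | IsIP r P ∧ P ⊆ seqLI (fun n => pastPt r (σ n)) ∧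
    P ⊆ seqLS (fun n => pastPt r (σ n)) ∧
    ∀ P' : Set X, IsIP r P' → P' ⊆ seqLS (fun n => pastPt r (σ n)) → P ⊆ P' → P = P'}

/-- The limit operator `Ľ`, dual to `L̂`. -/
def Lcheck (r : X → X → Prop) (σ : ℕ → X) : Set (Set X) :=
  {F | IsIF r F ∧ F ⊆ seqLI (fun n => futPt r (σ n)) ∧
    F ⊆ seqLS (fun n => futPt r (σ n)) ∧
    ∀ F' : Set X, IsIF r F' → F' ⊆ seqLS (fun n => futPt r (σ n)) → F ⊆ F' → F = F'}

/-- The limit operator `L`: `x ∈ L(σ)` iff `dec(I⁻(x)) ⊆ L̂(σ)` and `dec(I⁺(x)) ⊆ Ľ(σ)`. -/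
def limitOp (r : X → X → Prop) (σ : ℕ → X) : Set X :=
  {x | decP r (pastPt r x) ⊆ Lhat r σ ∧ decF r (futPt r x) ⊆ Lcheck r σ}

/-- A future chain: a sequence with `xₙ ≪ xₙ₊₁`. -/
def IsFutureChain (r : X → X → Prop) (c : ℕ → X) : Prop := ∀ n, r (c n) (c (n + 1))

/-- A past chain: a sequence with `xₙ₊₁ ≪ xₙ`. -/
def IsPastChain (r : X → X → Prop) (c : ℕ → X) : Prop := ∀ n, r (c (n + 1)) (c n)

/-- A (future or past) chain. -/
def IsChronChain (r : X → X → Prop) (c : ℕ → X) : Prop :=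
  IsFutureChain r c ∨ IsPastChain r c

/-- `(X, r)` is a chronological set: `r` is transitive and irreflexive, there are no
isolates, and there is a countable dense subset. -/
def IsChronSet (r : X → X → Prop) : Prop :=
  Transitive r ∧ Irreflexive r ∧ (∀ x : X, ∃ y : X, r x y ∨ r y x) ∧
    ∃ D : Set X, D.Countable ∧ ∀ x y : X, r x y → ∃ d ∈ D, r x d ∧ r d y

/-- Weakly distinguishing: points with the same past and future coincide. -/
def WeaklyDist (r : X → X → Prop) : Prop :=
  ∀ x y : X, pastPt r x = pastPt r y → futPt r x = futPt r y → x = y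

/-- The natural injection `i(x) = (I⁻(x), I⁺(x))` into `X_p × X_f`. -/
def inj (r : X → X → Prop) (x : X) : Set X × Set X := (pastPt r x, futPt r x)

/-- `(P, F) ∈ X_p × X_f` is an endpoint of a future chain `c` if `P = I⁻[c]` and
`dec(F) ⊆ Ľ(c)`; of a past chain if `F = I⁺[c]` and `dec(P) ⊆ L̂(c)`. -/
def IsEndpoint (r : X → X → Prop) (c : ℕ → X) (p : Set X × Set X) : Prop :=
  IsPastSet r p.1 ∧ IsFutureSet r p.2 ∧
    ((IsFutureChain r c ∧ p.1 = pastOf r (Set.range c) ∧ decF r p.2 ⊆ Lcheck r c) ∨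
     (IsPastChain r c ∧ p.2 = futureOf r (Set.range c) ∧ decP r p.1 ⊆ Lhat r c))

/-- `X^end`: the union of `i[X]` with all endpoints of all chains in `X`. -/
def endSet (r : X → X → Prop) : Set (Set X × Set X) :=
  Set.range (inj r) ∪ {p | ∃ c : ℕ → X, IsChronChain r c ∧ IsEndpoint r c p}

/-- A completion of `X`: a set `X̄` with `i[X] ⊆ X̄ ⊆ X^end` such that every chain
in `X` has some endpoint in `X̄`. -/
def IsCompletion (r : X → X → Prop) (Xb : Set (Set X × Set X)) : Prop :=
  Set.range (inj r) ⊆ Xb ∧ Xb ⊆ endSet r ∧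
    ∀ c : ℕ → X, IsChronChain r c → ∃ p ∈ Xb, IsEndpoint r c p

/-- The chronology on pairs: `(P,F) ≪̄ (P',F')` iff `F ∩ P' ≠ ∅`. -/
def llbar (p q : Set X × Set X) : Prop := (p.2 ∩ q.1).Nonempty

/-- The chronology `≪̄` on a completion, viewed on the subtype. -/
def subRel (Xb : Set (Set X × Set X)) (a b : ↥Xb) : Prop := llbar a.1 b.1

/-- The injection of `X` into a completion `X̄` (as a subtype). -/
def iota (r : X → X → Prop) (Xb : Set (Set X × Set X))
    (h : Set.range (inj r) ⊆ Xb) (x : X) : ↥Xb := ⟨inj r x, h ⟨x, rfl⟩⟩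

end CausalBoundary

open CausalBoundary

section Aux

variable {X : Type*} {r : X → X → Prop}

private lemma flip_trans (ht : Transitive r) : Transitive (flip r) :=
  fun _ _ _ h1 h2 => ht h2 h1

private lemma flip_dense (hd : ∀ x y, r x y → ∃ d, r x d ∧ r d y) :
    ∀ x y, flip r x y → ∃ d, flip r x d ∧ flip r d y := by
  intro x y hxy
  obtain ⟨d, h1, h2⟩ := hd y x hxy
  exact ⟨d, h2, h1⟩

private lemma mem_up {F : Set X} (hF : IsFutureSet r F) {x z : X}
    (hx : x ∈ F) (hxz : r x z) : z ∈ F := by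
  rw [hF]; exact ⟨x, hx, hxz⟩

private lemma mem_down {P : Set X} (hP : IsPastSet r P) {z y : X}
    (hy : y ∈ P) (hzy : r z y) : z ∈ P := by
  rw [hP]; exact ⟨y, hy, hzy⟩

private lemma exists_below {F : Set X} (hF : IsFutureSet r F) {x : X}
    (hx : x ∈ F) : ∃ s ∈ F, r s x := by
  rw [hF] at hx; exact hx

private lemma exists_above {P : Set X} (hP : IsPastSet r P) {x : X}
    (hx : x ∈ P) : ∃ s ∈ P, r x s := by
  rw [hP] at hx; exact hx

private lemma futureOf_isFutureSet (ht : Transitive r)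
    (hd : ∀ x y, r x y → ∃ d, r x d ∧ r d y) (S : Set X) :
    IsFutureSet r (futureOf r S) := by
  apply Set.Subset.antisymm
  · rintro x ⟨s, hs, hsx⟩
    obtain ⟨d, h1, h2⟩ := hd s x hsx
    exact ⟨d, ⟨s, hs, h1⟩, h2⟩
  · rintro z ⟨w, ⟨s, hs, hsw⟩, hwz⟩
    exact ⟨s, hs, ht hsw hwz⟩

private lemma directed_isIF {F : Set X} (hne : F.Nonempty) (hF : IsFutureSet r F)
    (hdir : ∀ u ∈ F, ∀ v ∈ F, ∃ w ∈ F, r w u ∧ r w v) : IsIF r F := by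
  refine ⟨hF, hne, ?_⟩
  rintro ⟨F₁, F₂, hF1, hF2, hs1, hs2, heq⟩
  obtain ⟨u, hu, hu1⟩ := Set.exists_of_ssubset hs1
  obtain ⟨v, hv, hv2⟩ := Set.exists_of_ssubset hs2
  obtain ⟨w, hwF, hwu, hwv⟩ := hdir u hu v hv
  have : w ∈ F₁ ∪ F₂ := heq ▸ hwF
  rcases this with hw | hw
  · exact hu1 (mem_up hF1 hw hwu)
  · exact hv2 (mem_up hF2 hw hwv)

private lemma isIF_directed (ht : Transitive r)
    (hd : ∀ x y, r x y → ∃ d, r x d ∧ r d y) {F : Set X} (hF : IsIF r F) :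
    ∀ u ∈ F, ∀ v ∈ F, ∃ w ∈ F, r w u ∧ r w v := by
  obtain ⟨hFs, _, hind⟩ := hF
  intro u hu v hv
  set S : Set X := {s | s ∈ F ∧ ∀ w, r w s → r w u → w ∉ F} with hS
  set F₁ := futureOf r (F ∩ {z | r z u}) with hF₁
  set F₂ := futureOf r S with hF₂
  have hF₁sub : F₁ ⊆ F := by
    rintro z ⟨s, ⟨hsF, _⟩, hsz⟩
    exact mem_up hFs hsF hsz
  have hF₂sub : F₂ ⊆ F := by
    rintro z ⟨s, ⟨hsF, _⟩, hsz⟩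
    exact mem_up hFs hsF hsz
  have hcover : F ⊆ F₁ ∪ F₂ := by
    intro z hz
    obtain ⟨s, hsF, hsz⟩ := exists_below hFs hz
    by_cases hcase : ∃ w, r w s ∧ r w u ∧ w ∈ F
    · obtain ⟨w, h1, h2, h3⟩ := hcase
      exact Or.inl ⟨w, ⟨h3, h2⟩, ht h1 hsz⟩
    · exact Or.inr ⟨s, ⟨hsF, fun w hws hwu hwF => hcase ⟨w, hws, hwu, hwF⟩⟩, hsz⟩
  have hu2 : u ∉ F₂ := by
    rintro ⟨s, ⟨hsF, hsprop⟩, hsu⟩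
    obtain ⟨w, hwF, hws⟩ := exists_below hFs hsF
    exact hsprop w hws (ht hws hsu) hwF
  by_cases h1 : F₁ = F
  · have hv1 : v ∈ F₁ := h1 ▸ hv
    obtain ⟨w, ⟨hwF, hwu⟩, hwv⟩ := hv1
    exact ⟨w, hwF, hwu, hwv⟩
  · exact absurd ⟨F₁, F₂, futureOf_isFutureSet ht hd _, futureOf_isFutureSet ht hd _,
      Set.ssubset_iff_subset_ne.mpr ⟨hF₁sub, h1⟩,
      Set.ssubset_iff_subset_ne.mpr ⟨hF₂sub, fun he => hu2 (he ▸ hu)⟩,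
      Set.Subset.antisymm hcover (Set.union_subset hF₁sub hF₂sub)⟩ hind

private lemma pastChain_mono (ht : Transitive r) {c : ℕ → X} (hc : IsPastChain r c)
    {n m : ℕ} (h : n < m) : r (c m) (c n) := by
  induction h with
  | refl => exact hc n
  | step _ ih => exact ht (hc _) ih

private lemma futureChain_mono (ht : Transitive r) {c : ℕ → X} (hc : IsFutureChain r c)
    {n m : ℕ} (h : n < m) : r (c n) (c m) :=
  pastChain_mono (r := flip r) (flip_trans ht) hc h

private lemma pastChain_future_isIF (ht : Transitive r)
    (hd : ∀ x y, r x y → ∃ d, r x d ∧ r d y) {c : ℕ → X} (hc : IsPastChain r c) :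
    IsIF r (futureOf r (Set.range c)) := by
  refine directed_isIF ⟨c 0, c 1, ⟨1, rfl⟩, hc 0⟩ (futureOf_isFutureSet ht hd _) ?_
  rintro u ⟨_, ⟨n, rfl⟩, hnu⟩ v ⟨_, ⟨m, rfl⟩, hmv⟩
  refine ⟨c (max n m), ⟨c (max n m + 1), ⟨max n m + 1, rfl⟩, hc _⟩, ?_, ?_⟩
  · rcases Nat.lt_or_ge n (max n m) with hlt | hge
    · exact ht (pastChain_mono ht hc hlt) hnu
    · have : max n m = n := le_antisymm hge (le_max_left n m)
      rw [this]; exact hnu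
  · rcases Nat.lt_or_ge m (max n m) with hlt | hge
    · exact ht (pastChain_mono ht hc hlt) hmv
    · have : max n m = m := le_antisymm hge (le_max_right n m)
      rw [this]; exact hmv

private lemma exists_mem_decF (ht : Transitive r)
    (hd : ∀ x y, r x y → ∃ d, r x d ∧ r d y) {F : Set X} (hF : IsFutureSet r F)
    {y : X} (hy : y ∈ F) : ∃ Q ∈ decF r F, y ∈ Q := by
  classical
  -- build a past chain in F below y
  have hstep : ∀ z : F, ∃ s : F, r (s : X) (z : X) := by
    rintro ⟨z, hz⟩
    obtain ⟨s, hs, hsz⟩ := exists_below hF hz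
    exact ⟨⟨s, hs⟩, hsz⟩
  obtain ⟨s0, hs0F, hs0y⟩ := exists_below hF hy
  let g : F → F := fun z => (hstep z).choose
  have hg : ∀ z : F, r ((g z : F) : X) (z : X) := fun z => (hstep z).choose_spec
  let σ : ℕ → X := fun n => ((g^[n] ⟨s0, hs0F⟩ : F) : X)
  have hσchain : IsPastChain r σ := by
    intro n
    show r ((g^[n + 1] ⟨s0, hs0F⟩ : F) : X) _
    rw [Function.iterate_succ_apply']
    exact hg _
  have hσF : ∀ n, σ n ∈ F := fun n => (g^[n] ⟨s0, hs0F⟩).2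
  set Q₀ := futureOf r (Set.range σ) with hQ₀
  have hQ₀IF : IsIF r Q₀ := pastChain_future_isIF ht hd hσchain
  have hQ₀F : Q₀ ⊆ F := by
    rintro z ⟨_, ⟨n, rfl⟩, hz⟩
    exact mem_up hF (hσF n) hz
  have hyQ₀ : y ∈ Q₀ := ⟨σ 0, ⟨0, rfl⟩, hs0y⟩
  -- Zorn
  set 𝒮 : Set (Set X) := {Q | IsIF r Q ∧ Q ⊆ F} with h𝒮
  have hzorn := zorn_subset_nonempty 𝒮 ?_ Q₀ ⟨hQ₀IF, hQ₀F⟩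
  · obtain ⟨M, hQ₀M, hMmax⟩ := hzorn
    refine ⟨M, ⟨hMmax.1.1, hMmax.1.2, ?_⟩, hQ₀M hyQ₀⟩
    intro Q' hQ'IF hQ'F hMQ'
    exact Set.Subset.antisymm hMQ' (hMmax.2 ⟨hQ'IF, hQ'F⟩ hMQ')
  · intro ch hch hchain ⟨Q, hQch⟩
    have hsub : ∀ A ∈ ch, A ⊆ F := fun A hA => (hch hA).2
    have hUfut : IsFutureSet r (⋃₀ ch) := by
      apply Set.Subset.antisymm
      · rintro x ⟨A, hA, hxA⟩
        obtain ⟨s, hs, hsx⟩ := exists_below (hch hA).1.1 hxA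
        exact ⟨s, ⟨A, hA, hs⟩, hsx⟩
      · rintro z ⟨s, ⟨A, hA, hsA⟩, hsz⟩
        exact ⟨A, hA, mem_up (hch hA).1.1 hsA hsz⟩
    refine ⟨⋃₀ ch, ⟨directed_isIF ?_ hUfut ?_, ?_⟩, fun A hA => Set.subset_sUnion_of_mem hA⟩
    · obtain ⟨q, hq⟩ := (hch hQch).1.2.1
      exact ⟨q, Q, hQch, hq⟩
    · rintro u ⟨A, hA, huA⟩ v ⟨B, hB, hvB⟩
      rcases hchain.total hA hB with hAB | hBA
      · obtain ⟨w, hw, hwu, hwv⟩ := isIF_directed ht hd (hch hB).1 u (hAB huA) v hvB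
        exact ⟨w, ⟨B, hB, hw⟩, hwu, hwv⟩
      · obtain ⟨w, hw, hwu, hwv⟩ := isIF_directed ht hd (hch hA).1 u huA v (hBA hvB)
        exact ⟨w, ⟨A, hA, hw⟩, hwu, hwv⟩
    · exact Set.sUnion_subset hsub

private lemma exists_mem_decP (ht : Transitive r)
    (hd : ∀ x y, r x y → ∃ d, r x d ∧ r d y) {P : Set X} (hP : IsPastSet r P)
    {x : X} (hx : x ∈ P) : ∃ Q ∈ decP r P, x ∈ Q :=
  exists_mem_decF (r := flip r) (flip_trans ht) (flip_dense hd) hP hx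

private lemma pastPt_isPastSet (ht : Transitive r)
    (hd : ∀ x y, r x y → ∃ d, r x d ∧ r d y) (w : X) :
    IsPastSet r (pastPt r w) := by
  apply Set.Subset.antisymm
  · intro x hx
    obtain ⟨d, h1, h2⟩ := hd x w hx
    exact ⟨d, h2, h1⟩
  · rintro z ⟨s, hs, hzs⟩
    exact ht hzs hs

private lemma futPt_isFutureSet (ht : Transitive r)
    (hd : ∀ x y, r x y → ∃ d, r x d ∧ r d y) (w : X) :
    IsFutureSet r (futPt r w) :=
  pastPt_isPastSet (r := flip r) (flip_trans ht) (flip_dense hd) w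

/-- Structure of elements of `X^end`: past/future set components. -/
private lemma endSet_struct (ht : Transitive r)
    (hd : ∀ x y, r x y → ∃ d, r x d ∧ r d y) {a : Set X × Set X}
    (ha : a ∈ endSet r) : IsPastSet r a.1 ∧ IsFutureSet r a.2 := by
  rcases ha with ⟨w, rfl⟩ | ⟨c, _, h1, h2, _⟩
  · exact ⟨pastPt_isPastSet ht hd w, futPt_isFutureSet ht hd w⟩
  · exact ⟨h1, h2⟩

/-- The key "through" lemma: for `a ∈ X^end`, anything in `a.1` is chronologically
below something below anything in `a.2`. -/
private lemma through (ht : Transitive r)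
    (hd : ∀ x y, r x y → ∃ d, r x d ∧ r d y) {a : Set X × Set X}
    (ha : a ∈ endSet r) {x y : X} (hx : x ∈ a.1) (hy : y ∈ a.2) :
    ∃ z, r x z ∧ r z y := by
  rcases ha with ⟨w, rfl⟩ | ⟨c, _, hpa, hfa, hcases⟩
  · exact ⟨w, hx, hy⟩
  rcases hcases with ⟨hfc, hP, hdec⟩ | ⟨hpc, hFeq, hdec⟩
  · -- future chain
    rw [hP] at hx
    obtain ⟨_, ⟨n, rfl⟩, hxn⟩ := hx
    obtain ⟨Q, hQdec, hyQ⟩ := exists_mem_decF ht hd hfa hy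
    have hQL := hdec hQdec
    have hyLI := hQL.2.1 hyQ
    simp only [seqLI, Set.mem_iUnion, Set.mem_iInter] at hyLI
    obtain ⟨N, hN⟩ := hyLI
    refine ⟨c (max N (n + 1)), ?_, hN _ (le_max_left _ _)⟩
    exact ht hxn (futureChain_mono ht hfc (Nat.lt_of_lt_of_le (Nat.lt_succ_self n)
      (le_max_right N (n + 1))))
  · -- past chain
    rw [hFeq] at hy
    obtain ⟨_, ⟨m, rfl⟩, hmy⟩ := hy
    obtain ⟨Q, hQdec, hxQ⟩ := exists_mem_decP ht hd hpa hx
    have hQL := hdec hQdec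
    have hxLI := hQL.2.1 hxQ
    simp only [seqLI, Set.mem_iUnion, Set.mem_iInter] at hxLI
    obtain ⟨N, hN⟩ := hxLI
    refine ⟨c (max N (m + 1)), hN _ (le_max_left _ _), ?_⟩
    exact ht (pastChain_mono ht hpc (Nat.lt_of_lt_of_le (Nat.lt_succ_self m)
      (le_max_right N (m + 1)))) hmy

private lemma endSet_nonempty_parts {a : Set X × Set X}
    (hnoiso : ∀ x : X, ∃ y : X, r x y ∨ r y x)
    (ha : a ∈ endSet r) : a.1.Nonempty ∨ a.2.Nonempty := by
  rcases ha with ⟨w, rfl⟩ | ⟨c, hch, _, _, hcases⟩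
  · obtain ⟨y, hy | hy⟩ := hnoiso w
    · exact Or.inr ⟨y, hy⟩
    · exact Or.inl ⟨y, hy⟩
  rcases hcases with ⟨hfc, hP, _⟩ | ⟨hpc, hF, _⟩
  · exact Or.inl (hP ▸ ⟨c 0, c 1, ⟨1, rfl⟩, hfc 0⟩)
  · exact Or.inr (hF ▸ ⟨c 0, c 1, ⟨1, rfl⟩, hpc 0⟩)

end Aux



/-- part of Thm. 4.2: for any completion `X̄` of a weakly
distinguishing chronological set, `(X̄, ≪̄)` is a chronological set: `≪̄` is transitive
and irreflexive, has no isolates, and for any countable dense `D ⊆ X` the set `i[D]`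
is a countable dense subset of `(X̄, ≪̄)`. -/
theorem stmt4 {X : Type*} (r : X → X → Prop) (h : IsChronSet r) (hw : WeaklyDist r)
    (Xb : Set (Set X × Set X)) (hc : IsCompletion r Xb) :
    Transitive (subRel Xb) ∧ Irreflexive (subRel Xb) ∧
    (∀ a : ↥Xb, ∃ b : ↥Xb, subRel Xb a b ∨ subRel Xb b a) ∧
    (∀ D : Set X, D.Countable → (∀ x y : X, r x y → ∃ d ∈ D, r x d ∧ r d y) →
      ({a : ↥Xb | ∃ d ∈ D, (a : Set X × Set X) = inj r d}).Countable ∧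
      ∀ a b : ↥Xb, subRel Xb a b →
        ∃ e : ↥Xb, (∃ d ∈ D, (e : Set X × Set X) = inj r d) ∧
          subRel Xb a e ∧ subRel Xb e b) := by
  obtain ⟨ht, hirr, hnoiso, D0, hD0c, hD0d⟩ := h
  have hd : ∀ x y, r x y → ∃ d, r x d ∧ r d y := by
    intro x y hxy
    obtain ⟨d, _, h1, h2⟩ := hD0d x y hxy
    exact ⟨d, h1, h2⟩
  obtain ⟨hsub, hend, _⟩ := hc
  have hB : ∀ a : Xb, IsPastSet r (a : Set X × Set X).1 ∧
      IsFutureSet r (a : Set X × Set X).2 := fun a => endSet_struct ht hd (hend a.2)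
  refine ⟨?_, ?_, ?_, ?_⟩
  · -- transitivity
    rintro a b c ⟨x, hx2, hx1⟩ ⟨y, hy2, hy1⟩
    obtain ⟨z, hxz, hzy⟩ := through ht hd (hend b.2) hx1 hy2
    exact ⟨z, mem_up (hB a).2 hx2 hxz, mem_down (hB c).1 hy1 hzy⟩
  · -- irreflexivity
    rintro a ⟨x, hx2, hx1⟩
    obtain ⟨z, hxz, hzx⟩ := through ht hd (hend a.2) hx1 hx2
    exact hirr x (ht hxz hzx)
  · -- no isolates
    intro a
    rcases endSet_nonempty_parts hnoiso (hend a.2) with ⟨x, hx⟩ | ⟨y, hy⟩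
    · obtain ⟨s, hs, hxs⟩ := exists_above (hB a).1 hx
      exact ⟨iota r Xb hsub x, Or.inr ⟨s, hxs, hs⟩⟩
    · obtain ⟨s, hs, hsy⟩ := exists_below (hB a).2 hy
      exact ⟨iota r Xb hsub y, Or.inl ⟨s, hs, hsy⟩⟩
  · -- density
    intro D hDc hDd
    constructor
    · have : {a : Xb | ∃ d ∈ D, (a : Set X × Set X) = inj r d} =
          Subtype.val ⁻¹' (inj r '' D) := by
        ext a
        simp only [Set.mem_setOf_eq, Set.mem_preimage, Set.mem_image]
        constructor
        · rintro ⟨d, hd', heq⟩; exact ⟨d, hd', heq.symm⟩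
        · rintro ⟨d, hd', heq⟩; exact ⟨d, hd', heq.symm⟩
      rw [this]
      exact (hDc.image _).preimage Subtype.val_injective
    · rintro a b ⟨x, hx2, hx1⟩
      obtain ⟨s, hs, hxs⟩ := exists_above (hB b).1 hx1
      obtain ⟨d, hdD, hxd, hds⟩ := hDd x s hxs
      refine ⟨iota r Xb hsub d, ⟨d, hdD, rfl⟩, ⟨x, hx2, hxd⟩, ⟨s, hds, hs⟩⟩
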